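/- For all R ≥ 1, τ ≥ 1, and k ≥ 0, the integral I(R,τ) = ∫₀^R ∫₀^R (1+r²+t²)^{−1} · r(r²+t²) / (r²+t² + (r²+t²)r² + 4(τ²+k²)r²) dt dr satisfies I(R,τ) ≤ C·R/τ for an absolute constant C. -/

import Mathlib

/-!
Bounding the denominator below by `s + 4τ²r² ≥ 4τ r √s` (AM-GM, with `s = r² + t²`) and using
`√(rt) ≤ √s ≤ (1 + s) / √s`, the integrand is at most `(4τ)⁻¹ r^(-1/2) t^(-1/2)`. This bound
separates the variables, and `∫₀^R x^(-1/2) dx = 2√R` gives `I(R, τ) ≤ (2√R)² / (4τ) = R / τ`.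
-/

open MeasureTheory Real Set intervalIntegral

lemma intervalIntegral.integral_mono_of_nonneg_on {f g : ℝ → ℝ} {a b : ℝ} (hab : a ≤ b)
    (hg : IntervalIntegrable g volume a b) (hf : ∀ x ∈ Ioc a b, 0 ≤ f x)
    (hfg : ∀ x ∈ Ioc a b, f x ≤ g x) :
    ∫ x in a..b, f x ≤ ∫ x in a..b, g x := by
  rw [integral_of_le hab, integral_of_le hab]
  exact integral_mono_of_nonneg ((ae_restrict_iff' measurableSet_Ioc).2 (.of_forall hf)) hg.1
    ((ae_restrict_iff' measurableSet_Ioc).2 (.of_forall hfg))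

lemma intervalIntegral.integral_integral_le_mul_of_le_mul {f : ℝ → ℝ → ℝ} {g h : ℝ → ℝ}
    {a b : ℝ} (hab : a ≤ b) (hg : IntervalIntegrable g volume a b)
    (hh : IntervalIntegrable h volume a b) (hf : ∀ x ∈ Ioc a b, ∀ y ∈ Ioc a b, 0 ≤ f x y)
    (hfgh : ∀ x ∈ Ioc a b, ∀ y ∈ Ioc a b, f x y ≤ g x * h y) :
    ∫ x in a..b, ∫ y in a..b, f x y ≤ (∫ x in a..b, g x) * ∫ y in a..b, h y := by
  rw [← integral_mul_const]
  refine integral_mono_of_nonneg_on hab (hg.mul_const _) (fun x hx ↦ ?_) fun x hx ↦ ?_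
  · rw [integral_of_le hab]
    exact setIntegral_nonneg measurableSet_Ioc (hf x hx)
  · rw [← integral_const_mul]
    exact integral_mono_of_nonneg_on hab (hh.const_mul _) (hf x hx) (hfgh x hx)

lemma integral_rpow_neg_half (b : ℝ) :
    ∫ x in (0 : ℝ)..b, x ^ (-(1 / 2) : ℝ) = 2 * √b := by
  rw [integral_rpow (Or.inl (by norm_num)), zero_rpow (by norm_num), sqrt_eq_rpow]
  norm_num
  ring

lemma intervalIntegrable_rpow_neg_half (b : ℝ) :
    IntervalIntegrable (fun x : ℝ ↦ x ^ (-(1 / 2) : ℝ)) volume 0 b :=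
  intervalIntegrable_rpow' (by norm_num)

lemma integrand_le_mul_rpow_neg_half {τ k r t : ℝ} (hτ : 0 < τ) (hr : 0 < r) (ht : 0 < t) :
    (1 + r ^ 2 + t ^ 2)⁻¹ *
      (r * (r ^ 2 + t ^ 2) /
        (r ^ 2 + t ^ 2 + (r ^ 2 + t ^ 2) * r ^ 2 + 4 * (τ ^ 2 + k ^ 2) * r ^ 2)) ≤
    (4 * τ)⁻¹ * r ^ (-(1 / 2) : ℝ) * t ^ (-(1 / 2) : ℝ) := by
  set s := r ^ 2 + t ^ 2 with hs
  set D := s + s * r ^ 2 + 4 * (τ ^ 2 + k ^ 2) * r ^ 2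
  set u := √s
  have hs0 : 0 < s := by positivity
  have hu : u ^ 2 = s := sq_sqrt hs0.le
  have hu0 : 0 < u := sqrt_pos.2 hs0
  have hD : 4 * τ * r * u ≤ D := by
    nlinarith [sq_nonneg (u - 2 * τ * r), mul_nonneg hs0.le (sq_nonneg r), sq_nonneg (k * r)]
  have hrt : √r * √t ≤ u := by
    rw [← sqrt_mul hr.le]
    exact sqrt_le_sqrt (by nlinarith [sq_nonneg (r - t)])
  have key : r * s * (4 * τ * (√r * √t)) ≤ (1 + s) * D :=
    calc r * s * (4 * τ * (√r * √t)) = 4 * τ * r * u * (u * (√r * √t)) := by rw [← hu]; ring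
      _ ≤ D * (1 + s) := by
          gcongr
          nlinarith [mul_le_mul_of_nonneg_left hrt hu0.le]
      _ = (1 + s) * D := mul_comm _ _
  rw [rpow_neg hr.le, rpow_neg ht.le, ← sqrt_eq_rpow, ← sqrt_eq_rpow]
  calc (1 + r ^ 2 + t ^ 2)⁻¹ * (r * s / D) = r * s / (D * (1 + s)) := by
        rw [inv_mul_eq_div, div_div, hs, add_assoc]
    _ ≤ 1 / (4 * τ * (√r * √t)) := by
        rw [div_le_div_iff₀ (by positivity) (by positivity)]
        linarith [mul_comm D (1 + s)]
    _ = (4 * τ)⁻¹ * (√r)⁻¹ * (√t)⁻¹ := by ring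

/-- For all `R ≥ 1`, `τ ≥ 1`, `k ≥ 0`, the double integral
`I(R,τ) = ∫₀^R ∫₀^R (1+r²+t²)⁻¹ · r(r²+t²)/(r²+t² + (r²+t²)r² + 4(τ²+k²)r²) dt dr`
satisfies `I(R,τ) ≤ C·R/τ` for an absolute constant `C`. -/
theorem stmt7 :
    ∃ C > (0:ℝ), ∀ R τ k : ℝ, 1 ≤ R → 1 ≤ τ → 0 ≤ k →
      (∫ r in (0:ℝ)..R, ∫ t in (0:ℝ)..R,
          (1 + r ^ 2 + t ^ 2)⁻¹ *
            (r * (r ^ 2 + t ^ 2) /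
              (r ^ 2 + t ^ 2 + (r ^ 2 + t ^ 2) * r ^ 2 + 4 * (τ ^ 2 + k ^ 2) * r ^ 2))) ≤
        C * R / τ := by
  refine ⟨1, one_pos, fun R τ k hR hτ _ ↦ ?_⟩
  have hR0 : 0 ≤ R := by linarith
  have hτ0 : 0 < τ := by linarith
  calc _ ≤ (∫ r in (0:ℝ)..R, (4 * τ)⁻¹ * r ^ (-(1 / 2) : ℝ)) *
          ∫ t in (0:ℝ)..R, t ^ (-(1 / 2) : ℝ) :=
        integral_integral_le_mul_of_le_mul hR0
          ((intervalIntegrable_rpow_neg_half R).const_mul _) (intervalIntegrable_rpow_neg_half R)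
          (fun r hr t _ ↦ by have := hr.1; positivity)
          fun r hr t ht ↦ integrand_le_mul_rpow_neg_half hτ0 hr.1 ht.1
    _ = (4 * τ)⁻¹ * (2 * √R) * (2 * √R) := by
        rw [intervalIntegral.integral_const_mul, integral_rpow_neg_half]
    _ = 1 * R / τ := by
        field_simp
        rw [sq_sqrt hR0]
        ring
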